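/- arXiv:2211.16052 — 8 statements merged into one kernel-verified Lean document; each statement's English description precedes it below -/
import Mathlib

section
/- Let h : L → M be a frame homomorphism between frames with right adjoint r. Then h is closed (meaning: for every m ∈ M there exists x ∈ L with {(a,b) : h(a) ∨ m = h(b) ∨ m} = {(a,b) : a ∨ x = b ∨ x}) if and only if r(h(x) ∨ m) = x ∨ r(m) for all x ∈ L, m ∈ M. -/
theorem stmt_4 {L M : Type*} [Order.Frame L] [Order.Frame M]
    (h : FrameHom L M) (r : M → L)
    (gc : ∀ (x : L) (m : M), h x ≤ m ↔ x ≤ r m) :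
    (∀ m : M, ∃ x : L, ∀ a b : L, (h a ⊔ m = h b ⊔ m ↔ a ⊔ x = b ⊔ x)) ↔
    (∀ (x : L) (m : M), r (h x ⊔ m) = x ⊔ r m) := by
  have hrm : ∀ m : M, h (r m) ≤ m := fun m => (gc _ _).mpr le_rfl
  constructor
  · intro hc a m
    obtain ⟨x, hx⟩ := hc m
    -- x = r m
    have hx1 : x ≤ r m := by
      have := (hx x ⊥).mpr (by simp)
      rw [map_bot, bot_sup_eq] at this
      exact (gc _ _).mp (le_sup_left.trans this.le)
    have hx2 : r m ≤ x := by
      have := (hx (r m) ⊥).mp (by rw [map_bot, bot_sup_eq, sup_eq_right.mpr (hrm m)])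
      simpa using le_sup_left.trans this.le
    have hxe : x = r m := le_antisymm hx1 hx2
    apply le_antisymm
    · -- r (h a ⊔ m) ≤ a ⊔ r m
      set c := r (h a ⊔ m) with hc'
      have hcle : h c ≤ h a ⊔ m := (gc _ _).mpr le_rfl
      have : h (c ⊔ a) ⊔ m = h a ⊔ m := by
        rw [map_sup, sup_assoc]
        exact sup_eq_right.mpr hcle
      have := (hx (c ⊔ a) a).mp this
      rw [hxe] at this
      calc c ≤ c ⊔ a ⊔ r m := le_sup_left.trans le_sup_left
        _ = a ⊔ r m := this
    · exact sup_le ((gc _ _).mp (le_sup_of_le_left (by simp))) ((gc _ _).mp ((hrm m).trans le_sup_right))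
  · intro hr m
    refine ⟨r m, fun a b => ⟨fun he => ?_, fun he => ?_⟩⟩
    · rw [← hr a m, ← hr b m, he]
    · have : h (a ⊔ r m) ⊔ m = h (b ⊔ r m) ⊔ m := by rw [he]
      rwa [map_sup, map_sup, sup_assoc, sup_assoc, sup_eq_right.mpr (hrm m)] at this
end

section
/- Let h : L → M be a frame homomorphism between frames possessing a left adjoint l. Then h is open (meaning: for every m ∈ M there exists x ∈ L with {(a,b) : h(a) ∧ m = h(b) ∧ m} = {(a,b) : a ∧ x = b ∧ x}) if and only if l(h(x) ∧ m) = x ∧ l(m) for all x ∈ L, m ∈ M. -/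
theorem stmt_5 {L M : Type*} [Order.Frame L] [Order.Frame M]
    (h : FrameHom L M) (l : M → L)
    (ga : ∀ (x : L) (m : M), l m ≤ x ↔ m ≤ h x) :
    (∀ m : M, ∃ x : L, ∀ a b : L, (h a ⊓ m = h b ⊓ m ↔ a ⊓ x = b ⊓ x)) ↔
    (∀ (x : L) (m : M), l (h x ⊓ m) = x ⊓ l m) := by
  have unit : ∀ m : M, m ≤ h (l m) := fun m => (ga (l m) m).mp le_rfl
  have lmono : ∀ {m m' : M}, m ≤ m' → l m ≤ l m' := by
    intro m m' hmm
    exact (ga (l m') m).mpr (hmm.trans (unit m'))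
  constructor
  · intro H x m
    -- any witness equals l of the element
    have key : ∀ (n : M) (y : L),
        (∀ a b : L, (h a ⊓ n = h b ⊓ n ↔ a ⊓ y = b ⊓ y)) → y = l n := by
      intro n y hy
      have h1 : y ≤ l n := by
        have e1 : h (l n) ⊓ n = h (⊤ : L) ⊓ n := by
          rw [map_top]
          simp [inf_eq_right.mpr (unit n)]
        have := (hy (l n) ⊤).mp e1
        simpa using this.symm.le.trans inf_le_left
      have h2 : l n ≤ y := by
        have e1 : y ⊓ y = ⊤ ⊓ y := by simp
        have := (hy y ⊤).mpr e1
        rw [map_top, top_inf_eq] at this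
        exact (ga y n).mpr (this.symm.le.trans inf_le_left)
      exact le_antisymm h1 h2
    obtain ⟨y, hy⟩ := H m
    have hylm : y = l m := key m y hy
    refine le_antisymm ?_ ?_
    · exact le_inf ((ga x (h x ⊓ m)).mpr inf_le_left) (lmono inf_le_right)
    · -- use the congruence for m on the pair (x ⊓ l (h x ⊓ m), x)
      set n := h x ⊓ m with hn
      have e1 : h (x ⊓ l n) ⊓ m = h x ⊓ m := by
        rw [map_inf]
        calc h x ⊓ h (l n) ⊓ m = h x ⊓ m ⊓ h (l n) := by ac_rfl
          _ = h x ⊓ m := inf_eq_left.mpr (unit n)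
      have e2 : (x ⊓ l n) ⊓ y = x ⊓ y := (hy (x ⊓ l n) x).mp e1
      calc x ⊓ l m = (x ⊓ l n) ⊓ y := by rw [hylm] at e2 ⊢; exact e2.symm
        _ ≤ l n := le_trans inf_le_left inf_le_right
  · intro H m
    refine ⟨l m, fun a b => ⟨fun hab => ?_, fun hab => ?_⟩⟩
    · have := congrArg l hab
      rwa [H, H] at this
    · have := congrArg h hab
      rw [map_inf, map_inf] at this
      calc h a ⊓ m = h a ⊓ (h (l m) ⊓ m) := by rw [inf_eq_right.mpr (unit m)]
        _ = (h a ⊓ h (l m)) ⊓ m := by rw [inf_assoc]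
        _ = (h b ⊓ h (l m)) ⊓ m := by rw [this]
        _ = h b ⊓ (h (l m) ⊓ m) := by rw [inf_assoc]
        _ = h b ⊓ m := by rw [inf_eq_right.mpr (unit m)]
end

section
/- Let h : L → M be a frame homomorphism that is dense (h(a) = 0 implies a = 0) and closed (h has a right adjoint r with r(h(x) ∨ m) = x ∨ r(m) for all x, m). Then h is injective. If moreover h is surjective, then h is an order isomorphism. -/
theorem stmt_6 {L M : Type*} [Order.Frame L] [Order.Frame M]
    (h : FrameHom L M) (r : M → L)
    (gc : ∀ (x : L) (m : M), h x ≤ m ↔ x ≤ r m)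
    (hdense : ∀ a : L, h a = ⊥ → a = ⊥)
    (hclosed : ∀ (x : L) (m : M), r (h x ⊔ m) = x ⊔ r m) :
    Function.Injective h ∧
    (Function.Surjective h → ∃ e : L ≃o M, ⇑e = ⇑h) := by
  have hrbot : r ⊥ = ⊥ := by
    apply hdense
    have : h (r ⊥) ≤ ⊥ := (gc _ _).2 le_rfl
    exact le_bot_iff.1 this
  have hrh : ∀ x : L, r (h x) = x := by
    intro x
    have := hclosed x ⊥
    simpa [hrbot] using this
  have hinj : Function.Injective h := by
    intro a b hab
    have : r (h a) = r (h b) := by rw [hab]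
    simpa [hrh] using this
  refine ⟨hinj, fun hsurj => ?_⟩
  have hhr : ∀ m : M, h (r m) = m := by
    intro m
    obtain ⟨x, rfl⟩ := hsurj m
    rw [hrh]
  refine ⟨{ toFun := h, invFun := r, left_inv := hrh, right_inv := hhr,
            map_rel_iff' := ?_ }, rfl⟩
  intro a b
  constructor
  · intro hab
    have := (gc a (h b)).1 hab
    simpa [hrh] using this
  · intro hab
    exact OrderHomClass.mono h hab
end

section
/- Let h : L → M be a frame homomorphism that is codense (h(a) = 1 implies a = 1) and open (h has a left adjoint l with l(h(x) ∧ m) = x ∧ l(m) for all x, m). Then h is injective; if moreover h is surjective, it is an isomorphism. -/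
theorem stmt_7 {L M : Type*} [Order.Frame L] [Order.Frame M]
    (h : FrameHom L M) (l : M → L)
    (ga : ∀ (x : L) (m : M), l m ≤ x ↔ m ≤ h x)
    (hcodense : ∀ a : L, h a = ⊤ → a = ⊤)
    (hopen : ∀ (x : L) (m : M), l (h x ⊓ m) = x ⊓ l m) :
    Function.Injective h ∧
    (Function.Surjective h → ∃ e : L ≃o M, ⇑e = ⇑h) := by
  have hltop : l ⊤ = ⊤ := by
    have : (⊤ : M) ≤ h (l ⊤) := (ga (l ⊤) ⊤).mp le_rfl
    exact hcodense _ (top_le_iff.mp this)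
  have hlh : ∀ x : L, l (h x) = x := by
    intro x
    have := hopen x ⊤
    simpa [hltop] using this
  have hinj : Function.Injective h := fun a b hab => by
    have := hlh a; rw [hab, hlh] at this; exact this.symm
  refine ⟨hinj, fun hsurj => ?_⟩
  have hle : ∀ a b : L, h a ≤ h b ↔ a ≤ b := by
    intro a b
    constructor
    · intro hab
      have : l (h a) ≤ l (h b) := by
        rw [ga]
        exact le_trans hab ((ga (l (h b)) (h b)).mp le_rfl)
      simpa [hlh] using this
    · intro hab; exact (OrderHomClass.mono h) hab
  exact ⟨{ toEquiv := Equiv.ofBijective h ⟨hinj, hsurj⟩,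
           map_rel_iff' := fun {a b} => hle a b }, rfl⟩
end

section
/- Let L be a frame. The quotient map q : L → L/θ by a frame congruence θ is closed (i.e., has right adjoint r satisfying r(q(x) ∨ m) = x ∨ r(m)) if and only if θ = ∇_a for some a ∈ L, where ∇_a = {(x,y) : x ∨ a = y ∨ a}. -/
theorem stmt_9 {L M : Type*} [Order.Frame L] [Order.Frame M]
    (q : FrameHom L M) (hq : Function.Surjective q)
    (θ : L → L → Prop) (hθ : ∀ x y : L, θ x y ↔ q x = q y) :
    (∃ r : M → L, (∀ (x : L) (m : M), q x ≤ m ↔ x ≤ r m) ∧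
        ∀ (x : L) (m : M), r (q x ⊔ m) = x ⊔ r m) ↔
    (∃ a : L, ∀ x y : L, θ x y ↔ x ⊔ a = y ⊔ a) := by
  constructor
  · rintro ⟨r, hadj, hcl⟩
    refine ⟨r ⊥, fun x y => ?_⟩
    rw [hθ]
    have hrq : ∀ z : L, r (q z) = z ⊔ r ⊥ := by
      intro z
      have := hcl z ⊥
      simpa using this
    have hqb : q (r ⊥) = ⊥ := by
      have : q (r ⊥) ≤ ⊥ := (hadj (r ⊥) ⊥).2 le_rfl
      exact le_bot_iff.1 this
    constructor
    · intro h
      rw [← hrq, ← hrq, h]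
    · intro h
      have : q (x ⊔ r ⊥) = q (y ⊔ r ⊥) := by rw [h]
      simpa [map_sup, hqb] using this
  · rintro ⟨a, ha⟩
    have key : ∀ x y : L, q x = q y ↔ x ⊔ a = y ⊔ a := by
      intro x y; rw [← hθ, ha]
    refine ⟨fun m => Function.surjInv hq m ⊔ a, ?_, ?_⟩
    · intro x m
      set t := Function.surjInv hq m with ht
      have hqt : q t = m := Function.surjInv_eq hq m
      constructor
      · intro h
        have h1 : q (x ⊔ t) = q t := by
          rw [map_sup, hqt]
          exact sup_eq_right.2 h
        have h2 : x ⊔ t ⊔ a = t ⊔ a := (key _ _).1 h1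
        calc x ≤ x ⊔ t ⊔ a := le_sup_left.trans le_sup_left
        _ = t ⊔ a := h2
      · intro h
        have h1 : x ⊔ (t ⊔ a) = t ⊔ a := sup_eq_right.2 h
        have h2 : q (x ⊔ (t ⊔ a)) = q (t ⊔ a) := by rw [h1]
        have hqa : q a = ⊥ := by
          have : q a = q ⊥ := (key a ⊥).2 (by simp)
          simpa using this
        simp only [map_sup, hqa, sup_bot_eq, hqt] at h2
        exact le_sup_left.trans h2.le
    · intro x m
      set t := Function.surjInv hq m with ht
      have hqt : q t = m := Function.surjInv_eq hq m
      have h1 : q (Function.surjInv hq (q x ⊔ m)) = q (x ⊔ t) := by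
        rw [Function.surjInv_eq hq, map_sup, hqt]
      have h2 := (key _ _).1 h1
      show Function.surjInv hq (q x ⊔ m) ⊔ a = x ⊔ (t ⊔ a)
      rw [h2, sup_assoc]
end

section
/- Let L be a frame. The quotient map q : L → L/θ by a frame congruence θ is open (has a left adjoint l with l(q(x) ∧ m) = x ∧ l(m)) if and only if θ = Δ_a for some a ∈ L, where Δ_a = {(x,y) : x ∧ a = y ∧ a}. -/
theorem stmt_10 {L M : Type*} [Order.Frame L] [Order.Frame M]
    (q : FrameHom L M) (hq : Function.Surjective q)
    (θ : L → L → Prop) (hθ : ∀ x y : L, θ x y ↔ q x = q y) :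
    (∃ l : M → L, (∀ (x : L) (m : M), l m ≤ x ↔ m ≤ q x) ∧
        ∀ (x : L) (m : M), l (q x ⊓ m) = x ⊓ l m) ↔
    (∃ a : L, ∀ x y : L, θ x y ↔ x ⊓ a = y ⊓ a) := by
  constructor
  · rintro ⟨l, hadj, hfrob⟩
    refine ⟨l ⊤, fun x y => ?_⟩
    have key : ∀ z : L, l (q z) = z ⊓ l ⊤ := by
      intro z
      have := hfrob z ⊤
      simpa using this
    have hqlq : ∀ z : L, q (l (q z)) = q z := by
      intro z
      apply le_antisymm
      · exact OrderHomClass.mono q ((hadj z (q z)).mpr le_rfl)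
      · exact (hadj (l (q z)) (q z)).mp le_rfl
    rw [hθ]
    constructor
    · intro h; rw [← key, ← key, h]
    · intro h
      have h1 := hqlq x
      rw [key] at h1
      have h2 := hqlq y
      rw [key] at h2
      rw [← h1, ← h2, h]
  · rintro ⟨a, ha⟩
    have hq' : ∀ x y : L, q x = q y ↔ x ⊓ a = y ⊓ a := by
      intro x y
      rw [← hθ]; exact ha x y
    have hle : ∀ x y : L, q x ≤ q y ↔ x ⊓ a ≤ y := by
      intro x y
      constructor
      · intro h
        have : q x = q (x ⊓ y) := by
          rw [map_inf]; exact (inf_eq_left.mpr h).symm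
        have h2 := (hq' x (x ⊓ y)).mp this
        calc x ⊓ a = (x ⊓ y) ⊓ a := h2
          _ ≤ y := le_trans inf_le_left inf_le_right
      · intro h
        have : x ⊓ a = (x ⊓ y) ⊓ a := by
          apply le_antisymm
          · exact le_inf (le_inf inf_le_left h) inf_le_right
          · exact inf_le_inf_right a inf_le_left
        have := (hq' x (x ⊓ y)).mpr this
        rw [this, map_inf]
        exact inf_le_right
    refine ⟨fun m => Classical.choose (hq m) ⊓ a, ?_, ?_⟩
    · intro x m
      have hc : q (Classical.choose (hq m)) = m := Classical.choose_spec (hq m)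
      show Classical.choose (hq m) ⊓ a ≤ x ↔ m ≤ q x
      have h2 := (hle (Classical.choose (hq m)) x).symm
      rwa [hc] at h2
    · intro x m
      have hc : q (Classical.choose (hq m)) = m := Classical.choose_spec (hq m)
      have hd : q (Classical.choose (hq (q x ⊓ m))) = q x ⊓ m :=
        Classical.choose_spec (hq (q x ⊓ m))
      have : q (Classical.choose (hq (q x ⊓ m))) = q (x ⊓ Classical.choose (hq m)) := by
        rw [hd, map_inf, hc]
      have h3 := (hq' _ _).mp this
      show Classical.choose (hq (q x ⊓ m)) ⊓ a = x ⊓ (Classical.choose (hq m) ⊓ a)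
      rw [h3, inf_assoc]
end

section
/- A frame L is Boolean (every element complemented) if and only if every frame congruence θ on L is a join of closed congruences, i.e., θ = ⨆_{a ∈ S} ∇_a for some subset S ⊆ L, where ∇_a = {(x,y) : x ∨ a = y ∨ a}. -/
/-- A frame congruence: an equivalence relation compatible with binary meets
and arbitrary joins. -/
def IsFrameCongruence {L : Type*} [Order.Frame L] (θ : L → L → Prop) : Prop :=
  Equivalence θ ∧
  (∀ a b c d : L, θ a b → θ c d → θ (a ⊓ c) (b ⊓ d)) ∧
  (∀ S : Set (L × L), (∀ p ∈ S, θ p.1 p.2) →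
    θ (sSup (Prod.fst '' S)) (sSup (Prod.snd '' S)))

/-- The join of a family of congruences: the least frame congruence containing
all of them. -/
def congSup {L : Type*} [Order.Frame L] (𝒮 : Set (L → L → Prop)) : L → L → Prop :=
  fun x y => ∀ ψ : L → L → Prop, IsFrameCongruence ψ →
    (∀ θ ∈ 𝒮, ∀ a b : L, θ a b → ψ a b) → ψ x y

/-- The closed congruence `∇_a`. -/
def nabla {L : Type*} [Order.Frame L] (a : L) : L → L → Prop :=
  fun x y => x ⊔ a = y ⊔ a

/-- The open congruence `Δ_a`. -/
def delta {L : Type*} [Order.Frame L] (a : L) : L → L → Prop :=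
  fun x y => x ⊓ a = y ⊓ a

lemma nabla_cong {L : Type*} [Order.Frame L] (b : L) : IsFrameCongruence (nabla b) := by
  refine ⟨⟨fun x => rfl, fun h => h.symm, fun h1 h2 => h1.trans h2⟩, ?_, ?_⟩
  · intro x y c d h1 h2
    show (x ⊓ c) ⊔ b = (y ⊓ d) ⊔ b
    rw [sup_inf_right, sup_inf_right, h1, h2]
  · intro S hS
    show sSup (Prod.fst '' S) ⊔ b = sSup (Prod.snd '' S) ⊔ b
    apply le_antisymm
    · refine sup_le ?_ le_sup_right
      refine sSup_le ?_
      rintro x ⟨p, hp, rfl⟩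
      calc p.1 ≤ p.1 ⊔ b := le_sup_left
        _ = p.2 ⊔ b := hS p hp
        _ ≤ sSup (Prod.snd '' S) ⊔ b := sup_le_sup_right (le_sSup (Set.mem_image_of_mem Prod.snd hp)) b
    · refine sup_le ?_ le_sup_right
      refine sSup_le ?_
      rintro x ⟨p, hp, rfl⟩
      calc p.2 ≤ p.2 ⊔ b := le_sup_left
        _ = p.1 ⊔ b := (hS p hp).symm
        _ ≤ sSup (Prod.fst '' S) ⊔ b := sup_le_sup_right (le_sSup (Set.mem_image_of_mem Prod.fst hp)) b

lemma delta_cong {L : Type*} [Order.Frame L] (a : L) : IsFrameCongruence (delta a) := by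
  refine ⟨⟨fun x => rfl, fun h => h.symm, fun h1 h2 => h1.trans h2⟩, ?_, ?_⟩
  · intro x y c d h1 h2
    show (x ⊓ c) ⊓ a = (y ⊓ d) ⊓ a
    rw [inf_inf_distrib_right x c a, inf_inf_distrib_right y d a, h1, h2]
  · intro S hS
    show sSup (Prod.fst '' S) ⊓ a = sSup (Prod.snd '' S) ⊓ a
    apply le_antisymm
    · rw [sSup_inf_eq]
      refine iSup₂_le ?_
      rintro x ⟨p, hp, rfl⟩
      calc p.1 ⊓ a = p.2 ⊓ a := hS p hp
        _ ≤ sSup (Prod.snd '' S) ⊓ a := inf_le_inf_right a (le_sSup (Set.mem_image_of_mem Prod.snd hp))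
    · rw [sSup_inf_eq]
      refine iSup₂_le ?_
      rintro x ⟨p, hp, rfl⟩
      calc p.2 ⊓ a = p.1 ⊓ a := (hS p hp).symm
        _ ≤ sSup (Prod.fst '' S) ⊓ a := inf_le_inf_right a (le_sSup (Set.mem_image_of_mem Prod.fst hp))

theorem stmt_15 {L : Type*} [Order.Frame L] :
    (∀ a : L, ∃ b : L, a ⊓ b = ⊥ ∧ a ⊔ b = ⊤) ↔
    (∀ θ : L → L → Prop, IsFrameCongruence θ →
      ∃ S : Set L, ∀ x y : L, θ x y ↔ congSup (nabla '' S) x y) := by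
  constructor
  · intro hB θ hθ
    obtain ⟨hEq, hMeet, hJoin⟩ := hθ
    refine ⟨{a | θ ⊥ a}, fun x y => ⟨?_, ?_⟩⟩
    · -- θ x y → congSup
      intro hxy ψ hψ hcont
      obtain ⟨x', hx1, hx2⟩ := hB x
      obtain ⟨y', hy1, hy2⟩ := hB y
      set z := x ⊔ y with hz
      -- θ z x and θ z y via join compatibility
      have hjoin2 : ∀ u v w : L, θ u v → θ (u ⊔ w) (v ⊔ w) := by
        intro u v w huv
        have := hJoin {(u, v), (w, w)} (by
          rintro p (rfl | rfl)
          · exact huv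
          · exact hEq.refl w)
        have h1 : Prod.fst '' ({(u, v), (w, w)} : Set (L × L)) = {u, w} := by
          ext t; simp [Set.mem_image]; tauto
        have h2 : Prod.snd '' ({(u, v), (w, w)} : Set (L × L)) = {v, w} := by
          ext t; simp [Set.mem_image]; tauto
        rw [h1, h2] at this
        simpa using this
      have hzx : θ z x := by
        have := hjoin2 y x x (hEq.symm hxy)  -- θ (y ⊔ x) (x ⊔ x)
        have : θ (x ⊔ y) x := by
          rw [sup_comm x y]
          simpa [sup_idem] using this
        exact this
      have hzy : θ z y := by
        have := hjoin2 x y y hxy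
        simpa [sup_idem] using this
      -- a := z ⊓ x' lies in S and nabla a x z
      have hax : θ ⊥ (z ⊓ x') := by
        have := hMeet z x x' x' hzx (hEq.refl x')
        rw [hx1] at this
        exact hEq.symm this
      have hay : θ ⊥ (z ⊓ y') := by
        have := hMeet z y y' y' hzy (hEq.refl y')
        rw [hy1] at this
        exact hEq.symm this
      have hxle : x ≤ z := le_sup_left
      have hyle : y ≤ z := le_sup_right
      have hnx : nabla (z ⊓ x') x z := by
        show x ⊔ (z ⊓ x') = z ⊔ (z ⊓ x')
        rw [sup_inf_left, hx2, inf_top_eq, sup_eq_right.mpr hxle,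
          sup_inf_self]
      have hny : nabla (z ⊓ y') y z := by
        show y ⊔ (z ⊓ y') = z ⊔ (z ⊓ y')
        rw [sup_inf_left, hy2, inf_top_eq, sup_eq_right.mpr hyle,
          sup_inf_self]
      have h1 : ψ x z := hcont (nabla (z ⊓ x')) ⟨z ⊓ x', hax, rfl⟩ x z hnx
      have h2 : ψ y z := hcont (nabla (z ⊓ y')) ⟨z ⊓ y', hay, rfl⟩ y z hny
      exact hψ.1.trans h1 (hψ.1.symm h2)
    · -- congSup → θ
      intro h
      refine h θ ⟨hEq, hMeet, hJoin⟩ ?_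
      rintro _ ⟨a, ha, rfl⟩ u v huv
      -- θ ⊥ a and u ⊔ a = v ⊔ a imply θ u v
      have hjoin2 : ∀ w : L, θ w (w ⊔ a) := by
        intro w
        have := hJoin {(w, w), (⊥, a)} (by
          rintro p (rfl | rfl)
          · exact hEq.refl w
          · exact ha)
        have h1 : Prod.fst '' ({(w, w), (⊥, a)} : Set (L × L)) = {w, ⊥} := by
          ext t; simp [Set.mem_image]; tauto
        have h2 : Prod.snd '' ({(w, w), (⊥, a)} : Set (L × L)) = {w, a} := by
          ext t; simp [Set.mem_image]; tauto
        rw [h1, h2] at this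
        simpa using this
      have h1 : θ u (u ⊔ a) := hjoin2 u
      have h2 : θ v (v ⊔ a) := hjoin2 v
      rw [huv] at h1
      exact hEq.trans h1 (hEq.symm h2)
  · intro h a
    obtain ⟨S, hS⟩ := h (delta a) (delta_cong a)
    refine ⟨sSup S, ?_, ?_⟩
    · -- a ⊓ sSup S = ⊥, since each s ∈ S has s ⊓ a = ⊥
      have hs : ∀ s ∈ S, s ⊓ a = ⊥ := by
        intro s hsS
        have : congSup (nabla '' S) ⊥ s := by
          intro ψ hψ hcont
          exact hcont (nabla s) ⟨s, hsS, rfl⟩ ⊥ s (by simp [nabla])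
        have := (hS ⊥ s).mpr this
        simpa [delta] using this.symm
      rw [inf_sSup_eq]
      refine le_antisymm (iSup₂_le fun s hsS => ?_) bot_le
      rw [inf_comm, hs s hsS]
    · -- a ⊔ sSup S = ⊤
      have hda : delta a a ⊤ := by simp [delta]
      have hcs : congSup (nabla '' S) a ⊤ := (hS a ⊤).mp hda
      have := hcs (nabla (sSup S)) (nabla_cong (sSup S)) (by
        rintro _ ⟨s, hsS, rfl⟩ u v huv
        show u ⊔ sSup S = v ⊔ sSup S
        have hsb : s ⊔ sSup S = sSup S := sup_eq_right.mpr (le_sSup hsS)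
        calc u ⊔ sSup S = u ⊔ (s ⊔ sSup S) := by rw [hsb]
          _ = (u ⊔ s) ⊔ sSup S := (sup_assoc u s (sSup S)).symm
          _ = (v ⊔ s) ⊔ sSup S := by rw [huv]
          _ = v ⊔ (s ⊔ sSup S) := sup_assoc v s (sSup S)
          _ = v ⊔ sSup S := by rw [hsb])
      simpa [nabla] using this
end

section
/- A frame L is Boolean (every element complemented) if and only if the map ∇ : L → CL, a ↦ ∇_a, from L into its congruence frame CL is surjective (equivalently, an isomorphism); i.e., every frame congruence on L is of the form ∇_a for some a ∈ L. -/
lemma cong_join2 {L : Type*} [Order.Frame L] {θ : L → L → Prop}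
    (h : IsFrameCongruence θ) {x y z w : L} (hxy : θ x y) (hzw : θ z w) :
    θ (x ⊔ z) (y ⊔ w) := by
  have := h.2.2 {(x, y), (z, w)} (by rintro p (rfl | rfl) <;> assumption)
  simpa [Set.image_pair] using this

lemma cong_bot {L : Type*} [Order.Frame L] {θ : L → L → Prop}
    (h : IsFrameCongruence θ) : θ (sSup {x | θ x ⊥}) ⊥ := by
  have := h.2.2 ((fun x => (x, (⊥ : L))) '' {x | θ x ⊥}) ?_
  · have h1 : Prod.fst '' ((fun x => (x, (⊥ : L))) '' {x | θ x ⊥}) = {x | θ x ⊥} := by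
      ext u; simp
    have h2 : sSup (Prod.snd '' ((fun x => (x, (⊥ : L))) '' {x | θ x ⊥})) = ⊥ := by
      apply sSup_eq_bot.2; rintro b hb; simp at hb; tauto
    rwa [h1, h2] at this
  · rintro p hp
    simp only [Set.mem_image] at hp
    obtain ⟨u, hu, rfl⟩ := hp
    exact hu

theorem stmt_16 {L : Type*} [Order.Frame L] :
    (∀ a : L, ∃ b : L, a ⊓ b = ⊥ ∧ a ⊔ b = ⊤) ↔
    (∀ θ : L → L → Prop, IsFrameCongruence θ →
      ∃ a : L, ∀ x y : L, θ x y ↔ x ⊔ a = y ⊔ a) := by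
  constructor
  · intro hB θ hθ
    obtain ⟨heq, hmeet, hjoin⟩ := hθ
    set a := sSup {x | θ x ⊥} with ha
    have hθa : θ a ⊥ := cong_bot ⟨heq, hmeet, hjoin⟩
    refine ⟨a, fun x y => ?_⟩
    constructor
    · intro hxy
      set u := x ⊓ y with hu
      set v := x ⊔ y with hv
      have hvy : θ v y := by
        have := cong_join2 ⟨heq, hmeet, hjoin⟩ hxy (heq.refl y)
        simpa using this
      have huy : θ u y := by
        have := hmeet x y y y hxy (heq.refl y)
        simpa using this
      have hvu : θ v u := heq.trans hvy (heq.symm huy)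
      obtain ⟨b, hb1, hb2⟩ := hB u
      have hvb : θ (v ⊓ b) ⊥ := by
        have := hmeet v u b b hvu (heq.refl b)
        rwa [hb1] at this
      have hvba : v ⊓ b ≤ a := le_sSup hvb
      have hvle : v ≤ u ⊔ a := by
        calc v = v ⊓ (u ⊔ b) := by rw [hb2, inf_top_eq]
        _ = (v ⊓ u) ⊔ (v ⊓ b) := inf_sup_left v u b
        _ = u ⊔ (v ⊓ b) := by rw [inf_eq_right.2 (inf_le_sup : u ≤ v)]
        _ ≤ u ⊔ a := sup_le_sup_left hvba u
      have hkey : v ⊔ a = u ⊔ a :=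
        le_antisymm (sup_le hvle le_sup_right)
          (sup_le_sup_right (inf_le_sup : u ≤ v) a)
      have hx : x ⊔ a = u ⊔ a :=
        le_antisymm (by rw [← hkey]; exact sup_le_sup_right le_sup_left a)
          (sup_le_sup_right inf_le_left a)
      have hy : y ⊔ a = u ⊔ a :=
        le_antisymm (by rw [← hkey]; exact sup_le_sup_right le_sup_right a)
          (sup_le_sup_right inf_le_right a)
      rw [hx, hy]
    · intro hxa
      have h1 : θ (x ⊔ a) x := by
        have := cong_join2 ⟨heq, hmeet, hjoin⟩ (heq.refl x) hθa
        simpa using this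
      have h2 : θ (y ⊔ a) y := by
        have := cong_join2 ⟨heq, hmeet, hjoin⟩ (heq.refl y) hθa
        simpa using this
      exact heq.trans (heq.symm h1) (hxa ▸ h2)
  · intro h a
    have hΔ : IsFrameCongruence (delta a) := by
      refine ⟨⟨fun x => rfl, fun h => h.symm, fun h1 h2 => h1.trans h2⟩, ?_, ?_⟩
      · intro p q r s h1 h2
        show (p ⊓ r) ⊓ a = (q ⊓ s) ⊓ a
        have e : ∀ x z : L, (x ⊓ z) ⊓ a = (x ⊓ a) ⊓ (z ⊓ a) := fun x z => by
          rw [inf_inf_distrib_right]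
        rw [e, e, h1, h2]
      · intro S hS
        show sSup (Prod.fst '' S) ⊓ a = sSup (Prod.snd '' S) ⊓ a
        rw [sSup_inf_eq, sSup_inf_eq]
        rw [iSup_image, iSup_image]
        exact biSup_congr fun p hp => hS p hp
    obtain ⟨b, hb⟩ := h (delta a) hΔ
    refine ⟨b, ?_, ?_⟩
    · have := (hb ⊥ b).mpr (by simp)
      simpa [delta, inf_comm] using this.symm
    · have := (hb a ⊤).mp (by simp [delta])
      simpa using this
end
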